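/- In the winner-bid auction, for the lower-valuation agent with value v_l, and any separating bid p with p ≥ v_l/2 + 2, the bid p−1 is weakly dominated by each bid in {v_l/2 − 1, v_l/2, ..., p−2}: against any strategy of the opponent supported in {p,...,p̄} ∪ {b : b ≤ p−1}, each such lower bid yields weakly higher expected utility than p−1, strictly higher against some opponent bid. -/

import Mathlib

open Finset Filter

/-- Utility in the winner-bid auction for an agent with value `v` bidding `b`
when the opponent bids `c`: the higher bidder wins the object and pays their own
bid to the other agent; ties are broken uniformly at random. -/
noncomputable def util (v b c : ℕ) : ℝ :=
  if c < b then (v : ℝ) - b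
  else if b < c then (c : ℝ)
  else (((v : ℝ) - b) + b) / 2

/-- Expected utility of bidding `b` against the mixed strategy `σ` of the opponent. -/
noncomputable def eu (pbar v : ℕ) (σ : ℕ → ℝ) (b : ℕ) : ℝ :=
  ∑ c ∈ range (pbar + 1), σ c * util v b c

/-- A mixed strategy on the bid space `{0,...,pbar}`. -/
def IsStrategy (pbar : ℕ) (σ : ℕ → ℝ) : Prop :=
  (∀ b, 0 ≤ σ b) ∧ (∑ b ∈ range (pbar + 1), σ b = 1) ∧ ∀ b, pbar < b → σ b = 0

/-- Nash equilibrium of the winner-bid auction with valuations `vl` (agent l) and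
`vh` (agent h). -/
def IsNash (pbar vl vh : ℕ) (σl σh : ℕ → ℝ) : Prop :=
  IsStrategy pbar σl ∧ IsStrategy pbar σh ∧
  (∀ b ∈ range (pbar + 1), 0 < σl b →
    ∀ b' ∈ range (pbar + 1), eu pbar vl σh b' ≤ eu pbar vl σh b) ∧
  (∀ b ∈ range (pbar + 1), 0 < σh b →
    ∀ b' ∈ range (pbar + 1), eu pbar vh σl b' ≤ eu pbar vh σl b)

/-- Expected payoff of the agent with value `v` playing `σown` against `σopp`. -/
noncomputable def payoff (pbar v : ℕ) (σown σopp : ℕ → ℝ) : ℝ :=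
  ∑ b ∈ range (pbar + 1), σown b * eu pbar v σopp b

/-- Probability that the agent playing `σown` receives the object. -/
noncomputable def winProb (pbar : ℕ) (σown σopp : ℕ → ℝ) : ℝ :=
  ∑ b ∈ range (pbar + 1), ∑ c ∈ range (pbar + 1),
    σown b * σopp c * (if c < b then 1 else if b < c then 0 else 1 / 2)

/-- An equilibrium is efficient if the higher-valuation agent (playing `σh`)
receives the object with probability one, i.e., the lower-valuation agent
receives it with probability zero. -/
def Efficient (pbar : ℕ) (σl σh : ℕ → ℝ) : Prop := winProb pbar σl σh = 0

/-- The pure strategy bidding `b`. -/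
noncomputable def pureS (b : ℕ) : ℕ → ℝ := fun c => if c = b then 1 else 0

/-- Weak payoff monotonicity for the agent with value `v` playing `σown` against `σopp`. -/
def WPMon (pbar v : ℕ) (σown σopp : ℕ → ℝ) : Prop :=
  ∀ m ∈ range (pbar + 1), ∀ n ∈ range (pbar + 1),
    σown n < σown m → eu pbar v σopp n < eu pbar v σopp m

/-- (Full) payoff monotonicity for the agent with value `v`. -/
def PMon (pbar v : ℕ) (σown σopp : ℕ → ℝ) : Prop :=
  ∀ m ∈ range (pbar + 1), ∀ n ∈ range (pbar + 1),
    (eu pbar v σopp n ≤ eu pbar v σopp m ↔ σown n ≤ σown m)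

/-- Empirical equilibrium: a Nash equilibrium that is the pointwise limit of a
sequence of weakly payoff monotone strategy profiles. -/
def IsEmpirical (pbar vl vh : ℕ) (σl σh : ℕ → ℝ) : Prop :=
  IsNash pbar vl vh σl σh ∧
  ∃ s : ℕ → (ℕ → ℝ) × (ℕ → ℝ),
    (∀ n, IsStrategy pbar (s n).1 ∧ IsStrategy pbar (s n).2 ∧
      WPMon pbar vl (s n).1 (s n).2 ∧ WPMon pbar vh (s n).2 (s n).1) ∧
    ∀ b, Tendsto (fun n => (s n).1 b) atTop (nhds (σl b)) ∧
         Tendsto (fun n => (s n).2 b) atTop (nhds (σh b))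

lemma util_of_gt {v b c : ℕ} (h : c < b) : util v b c = v - b := if_pos h

lemma util_of_lt {v b c : ℕ} (h : b < c) : util v b c = c := by
  rw [util, if_neg h.not_gt, if_pos h]

lemma util_self (v b : ℕ) : util v b b = v / 2 := by
  simp [util]

/-- `v < 2 * q` makes winning at `q` worse than the tie payoff `v / 2`, and `v ≤ q + b + 1` makes
it no better than losing at `b` and collecting any opponent bid above `b`. -/
lemma util_le_util_of_lt {v b q : ℕ} (hbq : b < q) (hq : v < 2 * q) (hb : v ≤ q + b + 1)
    (c : ℕ) : util v q c ≤ util v b c := by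
  have hbq' : (b : ℝ) < q := by exact_mod_cast hbq
  have hq' : (v : ℝ) < 2 * q := by exact_mod_cast hq
  rcases lt_trichotomy c b with hcb | rfl | hbc
  · rw [util_of_gt hcb, util_of_gt (hcb.trans hbq)]
    linarith
  · rw [util_of_gt hbq, util_self]
    linarith
  · rw [util_of_lt hbc]
    rcases lt_trichotomy c q with hcq | rfl | hqc
    · have hc : (v : ℝ) ≤ q + c := by exact_mod_cast (by omega : v ≤ q + c)
      rw [util_of_gt hcq]
      linarith
    · rw [util_self]
      linarith
    · rw [util_of_lt hqc]

lemma util_lt_util_self {v b q : ℕ} (hbq : b < q) (hq : v < 2 * q) :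
    util v q b < util v b b := by
  have hq' : (v : ℝ) < 2 * q := by exact_mod_cast hq
  rw [util_of_gt hbq, util_self]
  linarith

theorem stmt10_general (vl vh pbar : ℕ) (hpbar : vh / 2 + 2 ≤ pbar) (p : ℕ)
    (hp1 : vl / 2 + 2 ≤ p) (hp2 : p ≤ vh / 2)
    (b : ℕ) (hb1 : vl / 2 - 1 ≤ b) (hb2 : b ≤ p - 2) :
    (∀ c ∈ range (pbar + 1), util vl (p - 1) c ≤ util vl b c) ∧
    (∃ c ∈ range (pbar + 1), util vl (p - 1) c < util vl b c) := by
  have hbq : b < p - 1 := by omega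
  have hq : vl < 2 * (p - 1) := by omega
  refine ⟨fun c _ => util_le_util_of_lt hbq hq (by omega) c, b, ?_, util_lt_util_self hbq hq⟩
  rw [mem_range]
  omega

theorem stmt10 (vl vh pbar : ℕ) (hvl : 0 < vl) (hevl : Even vl) (hevh : Even vh)
    (hlt : vl < vh) (hpbar : vh / 2 + 2 ≤ pbar) (p : ℕ)
    (hp1 : vl / 2 + 2 ≤ p) (hp2 : p ≤ vh / 2)
    (b : ℕ) (hb1 : vl / 2 - 1 ≤ b) (hb2 : b ≤ p - 2) :
    (∀ c ∈ range (pbar + 1), util vl (p - 1) c ≤ util vl b c) ∧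
    (∃ c ∈ range (pbar + 1), util vl (p - 1) c < util vl b c) :=
  stmt10_general vl vh pbar hpbar p hp1 hp2 b hb1 hb2
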